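/- Let Ω_{SR}, Ω_{RD}, 𝓕_{SR}, 𝓕_{RD}, T, Γ > 0. Let f_a(x) = 2x·((Ω_{SR}+Ω_{RD})/(Ω_{SR}Ω_{RD}))·exp(−x²(Ω_{SR}+Ω_{RD})/(Ω_{SR}Ω_{RD})) and let g(x) = (1/(√2·π^{3/2}(Ω_{SR}+Ω_{RD})))·[ Ω_{RD}·exp(−x²/(2π²𝓕_{SR}²Ω_{SR}))/(√(Ω_{SR})𝓕_{SR}) + Ω_{SR}·exp(−x²/(2π²𝓕_{RD}²Ω_{RD}))/(√(Ω_{RD})𝓕_{RD}) ]. Then ∫_{−∞}^{0} |x| · f_a(√(T/Γ)) · g(x) dx = √(2π)·( √(T/(ΓΩ_{SR}))·𝓕_{SR} + √(T/(ΓΩ_{RD}))·𝓕_{RD} )·exp( −((Ω_{SR}+Ω_{RD})/(Ω_{SR}Ω_{RD}))·(T/Γ) ). -/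

import Mathlib

/-!
Since `fa √(T/Γ)` is a constant, the integral is `fa √(T/Γ)` times the absolute first moment
of the mixture `g` over the negative half-line. For one Gaussian kernel this moment is elementary,
`∫_{-∞}^0 |x| e^{-x²/d} dx = d/2` (reflect to `(0, ∞)`), so each mixture component with standard
deviation `σ` contributes `σ / √(2π)`; the closed form then follows by algebra with square roots
and `π^{3/2} = π √π`.
-/

open MeasureTheory Real Set

theorem integral_Ioi_mul_exp_neg_mul_sq {b : ℝ} (hb : 0 < b) :
    ∫ x in Ioi (0 : ℝ), x * exp (-b * x ^ 2) = (2 * b)⁻¹ := by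
  have h : ((∫ x in Ioi (0 : ℝ), x * exp (-b * x ^ 2) : ℝ) : ℂ) = (2 * b)⁻¹ := by
    rw [← integral_complex_ofReal]
    push_cast
    exact integral_mul_cexp_neg_mul_sq (by simpa using hb)
  exact_mod_cast h

theorem integrable_abs_mul_exp_neg_sq_div {d : ℝ} (hd : 0 < d) :
    Integrable fun x : ℝ => |x| * exp (-x ^ 2 / d) := by
  refine (integrable_mul_exp_neg_mul_sq (inv_pos.2 hd)).abs.congr (.of_forall fun x => ?_)
  simp only [abs_mul, abs_exp, neg_mul, ← div_eq_inv_mul, neg_div]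

theorem integral_Iio_abs_mul_exp_neg_sq_div {d : ℝ} (hd : 0 < d) :
    ∫ x in Iio (0 : ℝ), |x| * exp (-x ^ 2 / d) = d / 2 := by
  rw [← integral_Iic_eq_integral_Iio, ← neg_zero, ← integral_comp_neg_Ioi]
  calc ∫ x in Ioi (0 : ℝ), |-x| * exp (-(-x) ^ 2 / d)
      = ∫ x in Ioi (0 : ℝ), x * exp (-d⁻¹ * x ^ 2) :=
        setIntegral_congr_fun measurableSet_Ioi fun x (hx : 0 < x) => by
          rw [abs_neg, abs_of_pos hx, neg_sq, neg_div, div_eq_inv_mul, neg_mul]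
    _ = d / 2 := by rw [integral_Ioi_mul_exp_neg_mul_sq (inv_pos.2 hd)]; field_simp

theorem integral_Iio_abs_mul_add_exp_neg_sq_div {d₁ d₂ : ℝ} (hd₁ : 0 < d₁) (hd₂ : 0 < d₂)
    (a b : ℝ) :
    ∫ x in Iio (0 : ℝ), |x| * (a * exp (-x ^ 2 / d₁) + b * exp (-x ^ 2 / d₂)) =
      a * (d₁ / 2) + b * (d₂ / 2) := by
  simp_rw [mul_add, mul_left_comm |_| a, mul_left_comm |_| b]
  rw [integral_add ((integrable_abs_mul_exp_neg_sq_div hd₁).const_mul a).integrableOn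
      ((integrable_abs_mul_exp_neg_sq_div hd₂).const_mul b).integrableOn,
    integral_const_mul, integral_const_mul, integral_Iio_abs_mul_exp_neg_sq_div hd₁,
    integral_Iio_abs_mul_exp_neg_sq_div hd₂]

theorem rpow_three_halves {x : ℝ} (hx : 0 ≤ x) : x ^ ((3 : ℝ) / 2) = x * √x := by
  rw [show (3 : ℝ) / 2 = 1 + 1 / 2 by norm_num, rpow_add' hx (by norm_num), rpow_one, sqrt_eq_rpow]

/-- Equation (26) of the paper: the level down-crossing rate of the min-equivalent
virtual channel gain `a(t)` of a relay branch at the threshold level `√(T/Γ)`;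
`fa` is the Rayleigh density of `a(t)` and `g` the Gaussian-mixture density of its
time derivative. -/
theorem dssc_downcrossing_rate
    (ΩSR ΩRD FSR FRD T Γ : ℝ)
    (hΩSR : 0 < ΩSR) (hΩRD : 0 < ΩRD) (hFSR : 0 < FSR) (hFRD : 0 < FRD)
    (hT : 0 < T) (hΓ : 0 < Γ)
    (fa g : ℝ → ℝ)
    (hfa : fa = fun x => 2 * x * ((ΩSR + ΩRD) / (ΩSR * ΩRD)) *
      Real.exp (-x ^ 2 * (ΩSR + ΩRD) / (ΩSR * ΩRD)))
    (hg : g = fun x =>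
      (1 / (Real.sqrt 2 * π ^ ((3 : ℝ) / 2) * (ΩSR + ΩRD))) *
        (ΩRD * Real.exp (-x ^ 2 / (2 * π ^ 2 * FSR ^ 2 * ΩSR)) /
            (Real.sqrt ΩSR * FSR) +
          ΩSR * Real.exp (-x ^ 2 / (2 * π ^ 2 * FRD ^ 2 * ΩRD)) /
            (Real.sqrt ΩRD * FRD))) :
    ∫ x in Set.Iio (0 : ℝ), |x| * fa (Real.sqrt (T / Γ)) * g x =
      Real.sqrt (2 * π) *
        (Real.sqrt (T / (Γ * ΩSR)) * FSR + Real.sqrt (T / (Γ * ΩRD)) * FRD) *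
        Real.exp (-((ΩSR + ΩRD) / (ΩSR * ΩRD)) * (T / Γ)) := by
  have hfactor : ∀ x, |x| * fa √(T / Γ) * g x =
      fa √(T / Γ) * (1 / (√2 * π ^ ((3 : ℝ) / 2) * (ΩSR + ΩRD))) *
      (|x| * (ΩRD / (√ΩSR * FSR) * exp (-x ^ 2 / (2 * π ^ 2 * FSR ^ 2 * ΩSR)) +
        ΩSR / (√ΩRD * FRD) * exp (-x ^ 2 / (2 * π ^ 2 * FRD ^ 2 * ΩRD)))) := by
    intro x; rw [hg]; ring
  simp_rw [hfactor]
  rw [integral_const_mul, integral_Iio_abs_mul_add_exp_neg_sq_div (by positivity) (by positivity)]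
  simp only [hfa]
  have hS : √(T / (Γ * ΩSR)) = √(T / Γ) / √ΩSR := by rw [← div_div, sqrt_div' _ hΩSR.le]
  have hR : √(T / (Γ * ΩRD)) = √(T / Γ) / √ΩRD := by rw [← div_div, sqrt_div' _ hΩRD.le]
  have hE : -√(T / Γ) ^ 2 * (ΩSR + ΩRD) / (ΩSR * ΩRD) =
      -((ΩSR + ΩRD) / (ΩSR * ΩRD)) * (T / Γ) := by
    rw [sq_sqrt (div_pos hT hΓ).le]; ring
  rw [hS, hR, hE, sqrt_mul zero_le_two, rpow_three_halves pi_pos.le]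
  field_simp
  rw [sq_sqrt zero_le_two, sq_sqrt pi_pos.le]
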